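/- Let p ≥ 1 and let i ≤ m be positions with m + p ≤ n−1. Suppose T[k] = T[k+p] for every k with i ≤ k < m, and T[m] ≠ T[m+p]. Then lcp(i, i+p) = m − i, and S_i is lexicographically smaller than S_{i+p} if and only if T[m] < T[m+p]. (This justifies the repetition-detection step: within a repetition with period p, the relative order of the suffixes S_i, S_{i+p}, S_{i+2p}, … is determined by the first character breaking the repetition.) -/
import Mathlib


/-- The suffix `S_i = T[i..n)` of the text `T` of length `n`, as a list. -/
def suff {α : Type*} (T : ℕ → α) (n i : ℕ) : List α :=
  (List.range (n - i)).map (fun t => T (i + t))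

/-- `S_i` has type B: there is a `k ≥ i` with `T[k] < T[k+1]` and
`T[m] = T[m+1]` for all `i ≤ m < k`. -/
def TypeB {α : Type*} [LinearOrder α] (T : ℕ → α) (n i : ℕ) : Prop :=
  ∃ k, i ≤ k ∧ k + 1 < n ∧ T k < T (k + 1) ∧ ∀ m, i ≤ m → m < k → T m = T (m + 1)

/-- `S_i` has type A: either there is a `k ≥ i` with `T[k] > T[k+1]` and
`T[m] = T[m+1]` for all `i ≤ m < k`, or all characters from position `i`
to the end are equal (the type propagates from `S_{n-1}`). -/
def TypeA {α : Type*} [LinearOrder α] (T : ℕ → α) (n i : ℕ) : Prop :=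
  (∃ k, i ≤ k ∧ k + 1 < n ∧ T (k + 1) < T k ∧ ∀ m, i ≤ m → m < k → T m = T (m + 1))
  ∨ (∀ m, i ≤ m → m + 1 < n → T m = T (m + 1))

/-- `S_i` is a B*-suffix: `S_i` has type B and `S_{i+1}` has type A. -/
def TypeBStar {α : Type*} [LinearOrder α] (T : ℕ → α) (n i : ℕ) : Prop :=
  TypeB T n i ∧ TypeA T n (i + 1)

/-- `lcp T n i j` is the largest `s ≥ 0` with `i + s ≤ n`, `j + s ≤ n` and
`T[i+t] = T[j+t]` for all `t < s`. -/
noncomputable def lcp {α : Type*} (T : ℕ → α) (n i j : ℕ) : ℕ :=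
  sSup {s | i + s ≤ n ∧ j + s ≤ n ∧ ∀ t, t < s → T (i + t) = T (j + t)}

lemma suff_cons {α : Type*} (T : ℕ → α) (n i : ℕ) (h : i < n) :
    suff T n i = T i :: suff T n (i + 1) := by
  unfold suff
  rw [show n - i = (n - (i + 1)) + 1 by omega, List.range_succ_eq_map,
    List.map_cons, List.map_map]
  simp only [Nat.add_zero]
  congr 1
  apply List.map_congr_left
  intro a _
  simp only [Function.comp_apply]
  congr 1
  omega

lemma lex_cons_iff' {α : Type*} [LinearOrder α] (a b : α) (l1 l2 : List α) :
    List.Lex (· < ·) (a :: l1) (b :: l2) ↔ a < b ∨ a = b ∧ List.Lex (· < ·) l1 l2 := by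
  constructor
  · intro h
    cases h with
    | rel h => exact Or.inl h
    | cons h => exact Or.inr ⟨rfl, h⟩
  · rintro (h | ⟨rfl, h⟩)
    · exact List.Lex.rel h
    · exact List.Lex.cons h

lemma lex_aux {α : Type*} [LinearOrder α] (T : ℕ → α) (n p m : ℕ)
    (hmp : m + p < n) (hp : 1 ≤ p) (hbrk : T m ≠ T (m + p)) :
    ∀ d i, i + d = m → (∀ k, i ≤ k → k < m → T k = T (k + p)) →
      (List.Lex (· < ·) (suff T n i) (suff T n (i + p)) ↔ T m < T (m + p)) := by
  intro d
  induction d with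
  | zero =>
    intro i hi _
    subst hi
    simp only [Nat.add_zero] at *
    rw [suff_cons T n i (by omega), suff_cons T n (i + p) (by omega), lex_cons_iff']
    constructor
    · rintro (h | ⟨h, -⟩)
      · exact h
      · exact absurd h hbrk
    · exact Or.inl
  | succ d ih =>
    intro i hi hrep
    have heq : T i = T (i + p) := hrep i le_rfl (by omega)
    rw [suff_cons T n i (by omega), suff_cons T n (i + p) (by omega), lex_cons_iff',
      show i + p + 1 = i + 1 + p by omega,
      ih (i + 1) (by omega) (fun k hk hk' => hrep k (by omega) hk')]
    constructor
    · rintro (h | ⟨-, h⟩)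
      · rw [heq] at h; exact absurd h (lt_irrefl _)
      · exact h
    · exact fun h => Or.inr ⟨heq, h⟩

/-- Repetition detection: if `T[k] = T[k+p]` for all `i ≤ k < m` and
`T[m] ≠ T[m+p]`, then `lcp(i, i+p) = m - i` and `S_i < S_{i+p}` iff
`T[m] < T[m+p]`. -/
theorem stmt_13 {α : Type*} [LinearOrder α] (T : ℕ → α) (n : ℕ) (hn : 1 ≤ n)
    (p i m : ℕ) (hp : 1 ≤ p) (him : i ≤ m) (hm : m + p ≤ n - 1)
    (hrep : ∀ k, i ≤ k → k < m → T k = T (k + p)) (hbrk : T m ≠ T (m + p)) :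
    lcp T n i (i + p) = m - i ∧
    (List.Lex (· < ·) (suff T n i) (suff T n (i + p)) ↔ T m < T (m + p)) := by
  have hmp : m + p < n := by omega
  constructor
  · have hgreat : IsGreatest
        {s | i + s ≤ n ∧ i + p + s ≤ n ∧ ∀ t, t < s → T (i + t) = T (i + p + t)}
        (m - i) := by
      constructor
      · refine ⟨by omega, by omega, fun t ht => ?_⟩
        rw [show i + p + t = (i + t) + p by omega]
        exact hrep (i + t) (by omega) (by omega)
      · intro s hs
        by_contra h
        push_neg at h
        have := hs.2.2 (m - i) (by omega)
        rw [show i + (m - i) = m by omega, show i + p + (m - i) = m + p by omega] at this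
        exact hbrk this
    exact hgreat.csSup_eq
  · exact lex_aux T n p m hmp hp hbrk (m - i) i (by omega) hrep
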